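/- arXiv:2107.06614 — 11 statements merged into one kernel-verified Lean document; each statement's English description precedes it below -/
import Mathlib

section
/- Let V and H be real inner product spaces and D : V → H a linear map. Let f and g be linear functionals on V, let u ∈ V satisfy ⟨D u, D w⟩ = f(w) for all w ∈ V, and let σ ∈ H satisfy ⟨σ, D w⟩ = g(w) for all w ∈ V. Then for every v ∈ V: ‖D(u − v)‖² + ‖D u − σ‖² = ‖D v − σ‖² + 2 (f − g)(u − v). -/
open RealInnerProductSpace

/-- Two-energies principle with data oscillation (Lemma 3.1, eq. (3.9)). -/
theorem two_energies_principle_osc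
    {V H : Type*} [NormedAddCommGroup V] [InnerProductSpace ℝ V]
    [NormedAddCommGroup H] [InnerProductSpace ℝ H]
    (D : V →ₗ[ℝ] H) (f g : V →ₗ[ℝ] ℝ) (u : V) (σ : H)
    (hu : ∀ w : V, ⟪D u, D w⟫ = f w)
    (hσ : ∀ w : V, ⟪σ, D w⟫ = g w)
    (v : V) :
    ‖D (u - v)‖ ^ 2 + ‖D u - σ‖ ^ 2 = ‖D v - σ‖ ^ 2 + 2 * (f - g) (u - v) := by
  have hf := hu (u - v)
  have hg := hσ (u - v)
  have hDs : D (u - v) = D u - D v := map_sub D u v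
  rw [hDs] at hf hg ⊢
  rw [inner_sub_right] at hf hg
  simp only [LinearMap.sub_apply]
  rw [← hf, ← hg]
  rw [@norm_sub_sq_real, @norm_sub_sq_real, @norm_sub_sq_real,
    real_inner_comm (D v) σ, real_inner_comm (D u) σ, real_inner_self_eq_norm_sq]
  ring
end

section
/- Let V and H be real inner product spaces and D : V → H a linear map. Let f : V → ℝ be a linear functional, let û ∈ V satisfy ⟨D û, D w⟩ = f(w) for all w ∈ V, and let σ ∈ H satisfy ⟨σ, D w⟩ = f(w) for all w ∈ V. Then for every v ∈ V one has both ‖D(û − v)‖ ≤ ‖D v − σ‖ and ‖D û − σ‖ ≤ ‖D v − σ‖. -/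
open RealInnerProductSpace

/-- One-sided guaranteed bounds from the two-energies identity (Lemma 3.1). -/
theorem two_energies_one_sided_bounds
    {V H : Type*} [NormedAddCommGroup V] [InnerProductSpace ℝ V]
    [NormedAddCommGroup H] [InnerProductSpace ℝ H]
    (D : V →ₗ[ℝ] H) (f : V →ₗ[ℝ] ℝ) (uhat : V) (σ : H)
    (hu : ∀ w : V, ⟪D uhat, D w⟫ = f w)
    (hσ : ∀ w : V, ⟪σ, D w⟫ = f w)
    (v : V) :
    ‖D (uhat - v)‖ ≤ ‖D v - σ‖ ∧ ‖D uhat - σ‖ ≤ ‖D v - σ‖ := by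
  have horth : ⟪D (v - uhat), D uhat - σ⟫ = 0 := by
    rw [real_inner_comm, inner_sub_left, hu (v - uhat), hσ (v - uhat)]
    ring
  have hdecomp : D v - σ = D (v - uhat) + (D uhat - σ) := by
    rw [map_sub]; abel
  have hsq : ‖D v - σ‖ ^ 2 = ‖D (v - uhat)‖ ^ 2 + ‖D uhat - σ‖ ^ 2 := by
    rw [hdecomp, norm_add_sq_real, horth]; ring
  have h1 : ‖D (uhat - v)‖ = ‖D (v - uhat)‖ := by
    rw [← norm_neg, ← map_neg, neg_sub]
  constructor
  · rw [h1]
    nlinarith [norm_nonneg (D (v - uhat)), norm_nonneg (D uhat - σ), norm_nonneg (D v - σ)]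
  · nlinarith [norm_nonneg (D (v - uhat)), norm_nonneg (D uhat - σ), norm_nonneg (D v - σ)]
end

section
/- Let V, H and W be real inner product spaces, D : V → H and ι : V → W linear maps. Let f and f_h be linear functionals on V and f̃ ∈ W; define the goal functional by Q(v) = ⟨f̃, ι v⟩ for v ∈ V. Assume u ∈ V satisfies ⟨D u, D w⟩ = f(w) for all w ∈ V, ũ ∈ V satisfies ⟨D ũ, D w⟩ = ⟨f̃, ι w⟩ for all w ∈ V, and σ ∈ H satisfies ⟨σ, D w⟩ = f_h(w) for all w ∈ V. Then for every s ∈ V and every u_h ∈ W the goal error equation holds: Q(u) − ⟨f̃, u_h⟩ = (f − f_h)(ũ) + ⟨σ − D s, D ũ⟩ + ( ⟨f̃, ι s⟩ − ⟨f̃, u_h⟩ ). -/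
open RealInnerProductSpace

/-- Goal error equation (eq. (4.14)), Hilbert-space form. -/
theorem goal_error_equation
    {V H W : Type*} [NormedAddCommGroup V] [InnerProductSpace ℝ V]
    [NormedAddCommGroup H] [InnerProductSpace ℝ H]
    [NormedAddCommGroup W] [InnerProductSpace ℝ W]
    (D : V →ₗ[ℝ] H) (ι : V →ₗ[ℝ] W)
    (f fh : V →ₗ[ℝ] ℝ) (ftilde : W)
    (Q : V → ℝ) (hQ : ∀ v : V, Q v = ⟪ftilde, ι v⟫)
    (u utilde : V) (σ : H)
    (hu : ∀ w : V, ⟪D u, D w⟫ = f w)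
    (hutilde : ∀ w : V, ⟪D utilde, D w⟫ = ⟪ftilde, ι w⟫)
    (hσ : ∀ w : V, ⟪σ, D w⟫ = fh w)
    (s : V) (uh : W) :
    Q u - ⟪ftilde, uh⟫ =
      (f - fh) utilde + ⟪σ - D s, D utilde⟫ + (⟪ftilde, ι s⟫ - ⟪ftilde, uh⟫) := by
  have h1 : Q u = f utilde := by
    rw [hQ, ← hutilde u, real_inner_comm, hu]
  have h2 : ⟪ftilde, ι s⟫ = ⟪D s, D utilde⟫ := by
    rw [← hutilde s, real_inner_comm]
  simp only [LinearMap.sub_apply, inner_sub_left, h1, h2, hσ]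
  ring
end

section
/- Let V and H be real inner product spaces and D : V → H a linear map. Let Q and f̃_h be linear functionals on V. Assume ũ ∈ V satisfies ⟨D ũ, D w⟩ = Q(w) for all w ∈ V and σ̃ ∈ H satisfies ⟨σ̃, D w⟩ = f̃_h(w) for all w ∈ V. For s̃ ∈ V define σ̃ᵐ = (1/2)(σ̃ + D s̃) and the dual oscillation osc = |(Q − f̃_h)(ũ − s̃)|^{1/2}. Then ‖D ũ − σ̃ᵐ‖ ≤ (1/2) ‖D s̃ − σ̃‖ + osc. -/
open RealInnerProductSpace

/-- Guaranteed bound (4.17): ‖D ũ − σ̃ᵐ‖ ≤ (1/2)‖D s̃ − σ̃‖ + osc. -/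
theorem averaged_tensor_bound
    {V H : Type*} [NormedAddCommGroup V] [InnerProductSpace ℝ V]
    [NormedAddCommGroup H] [InnerProductSpace ℝ H]
    (D : V →ₗ[ℝ] H) (Q ftildeh : V →ₗ[ℝ] ℝ) (utilde : V) (σtilde : H)
    (hutilde : ∀ w : V, ⟪D utilde, D w⟫ = Q w)
    (hσ : ∀ w : V, ⟪σtilde, D w⟫ = ftildeh w)
    (stilde : V) :
    ‖D utilde - (1 / 2 : ℝ) • (σtilde + D stilde)‖ ≤
      (1 / 2 : ℝ) * ‖D stilde - σtilde‖
        + Real.sqrt |(Q - ftildeh) (utilde - stilde)| := by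
  set a := D utilde with ha
  set s := D stilde with hs
  set t := σtilde with ht
  -- key algebraic identity
  have hcross : ⟪a - t, a - s⟫ = (Q - ftildeh) (utilde - stilde) := by
    have h1 : ⟪a, a - s⟫ = Q (utilde - stilde) := by
      have := hutilde (utilde - stilde); rwa [map_sub] at this
    have h2 : ⟪t, a - s⟫ = ftildeh (utilde - stilde) := by
      have := hσ (utilde - stilde); rwa [map_sub] at this
    rw [inner_sub_left, h1, h2]; simp
  have key : ‖a - (1 / 2 : ℝ) • (t + s)‖ ^ 2
      = (1 / 4) * ‖s - t‖ ^ 2 + ⟪a - t, a - s⟫ := by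
    have e1 : ‖a - (1 / 2 : ℝ) • (t + s)‖ ^ 2 = ⟪a - (1 / 2 : ℝ) • (t + s), a - (1 / 2 : ℝ) • (t + s)⟫ :=
      (real_inner_self_eq_norm_sq _).symm
    have e2 : ‖s - t‖ ^ 2 = ⟪s - t, s - t⟫ := (real_inner_self_eq_norm_sq _).symm
    rw [e1, e2]
    simp only [inner_sub_left, inner_sub_right, inner_add_left, inner_add_right,
      real_inner_smul_left, real_inner_smul_right]
    rw [real_inner_comm t a, real_inner_comm s a, real_inner_comm s t]
    ring
  set osc := Real.sqrt |(Q - ftildeh) (utilde - stilde)| with hosc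
  have hosc_nonneg : 0 ≤ osc := Real.sqrt_nonneg _
  have hosc_sq : osc ^ 2 = |(Q - ftildeh) (utilde - stilde)| := by
    rw [hosc, Real.sq_sqrt (abs_nonneg _)]
  have hle : ‖a - (1 / 2 : ℝ) • (t + s)‖ ^ 2
      ≤ ((1 / 2 : ℝ) * ‖s - t‖ + osc) ^ 2 := by
    have habs : ⟪a - t, a - s⟫ ≤ osc ^ 2 := by
      rw [hosc_sq, ← hcross]; exact le_abs_self _
    have hmul : 0 ≤ (1 / 2 : ℝ) * ‖s - t‖ * osc :=
      mul_nonneg (mul_nonneg (by norm_num) (norm_nonneg _)) hosc_nonneg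
    calc ‖a - (1 / 2 : ℝ) • (t + s)‖ ^ 2
        = (1 / 4) * ‖s - t‖ ^ 2 + ⟪a - t, a - s⟫ := key
      _ ≤ (1 / 4) * ‖s - t‖ ^ 2 + osc ^ 2 := by linarith
      _ ≤ ((1 / 2 : ℝ) * ‖s - t‖ + osc) ^ 2 := by nlinarith
  have hR : 0 ≤ (1 / 2 : ℝ) * ‖s - t‖ + osc :=
    add_nonneg (mul_nonneg (by norm_num) (norm_nonneg _)) hosc_nonneg
  nlinarith [norm_nonneg (a - (1 / 2 : ℝ) • (t + s))]
end

section
/- Let V and H be real inner product spaces and D : V → H a linear map. Let f, f_h, Q and f̃_h be linear functionals on V. Assume u ∈ V satisfies ⟨D u, D w⟩ = f(w) for all w ∈ V, ũ ∈ V satisfies ⟨D ũ, D w⟩ = Q(w) for all w ∈ V, σ ∈ H satisfies ⟨σ, D w⟩ = f_h(w) for all w ∈ V, and σ̃ ∈ H satisfies ⟨σ̃, D w⟩ = f̃_h(w) for all w ∈ V. For s, s̃ ∈ V set σ̃ᵐ = (1/2)(σ̃ + D s̃), osc_dual = |(Q − f̃_h)(ũ − s̃)|^{1/2} and osc_prim²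 = |(f − f_h)(ũ − s̃)|. Then | Q(u) − Q(s) − ⟨σ − D s, σ̃ᵐ⟩ | ≤ ‖D s − σ‖ ( (1/2) ‖D s̃ − σ̃‖ + osc_dual ) + | (f − f_h)(s̃) | + osc_prim². -/
open RealInnerProductSpace

/-!
By the dual problem, `Q u - Q s = ⟪D (u - s), D ũ⟫`; subtracting `⟪σ - D s, σ̃ᵐ⟫` leaves the
primal residual `(f - f_h) ũ` plus `⟪σ - D s, D ũ - σ̃ᵐ⟫`, which Cauchy–Schwarz bounds by
`‖D s - σ‖ ‖D ũ - σ̃ᵐ‖`. Since `σ̃ᵐ` is the midpoint of `σ̃` and `D s̃`, the dual problem gives the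
Prager–Synge type identity `‖D ũ - σ̃ᵐ‖² = ¼ ‖D s̃ - σ̃‖² + (Q - f̃_h)(ũ - s̃)`, whence
`‖D ũ - σ̃ᵐ‖ ≤ ½ ‖D s̃ - σ̃‖ + osc_dual`.
-/

theorem le_add_sqrt_abs_of_sq_eq {r a c : ℝ} (ha : 0 ≤ a) (h : r ^ 2 = a ^ 2 + c) :
    r ≤ a + Real.sqrt |c| := by
  have hsq : r ^ 2 ≤ (a + Real.sqrt |c|) ^ 2 := by
    nlinarith [le_abs_self c, Real.sq_sqrt (abs_nonneg c), Real.sqrt_nonneg |c|]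
  exact (le_abs_self r).trans (abs_le_of_sq_le_sq hsq (by positivity))

section

variable {H : Type*} [NormedAddCommGroup H] [InnerProductSpace ℝ H]

theorem norm_sub_half_smul_add_sq (x y z : H) :
    ‖x - (1 / 2 : ℝ) • (z + y)‖ ^ 2 = ((1 / 2 : ℝ) * ‖y - z‖) ^ 2 + ⟪x - z, x - y⟫ := by
  simp only [mul_pow, ← real_inner_self_eq_norm_sq, inner_sub_left, inner_sub_right,
    inner_add_left, inner_add_right, real_inner_smul_left, real_inner_smul_right,
    real_inner_comm x y, real_inner_comm x z, real_inner_comm y z]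
  ring

theorem inner_sub_sub_eq_inner_sub_add_inner (a b c x m : H) :
    ⟪a - b, x⟫ - ⟪c - b, m⟫ = ⟪a - c, x⟫ + ⟪c - b, x - m⟫ := by
  simp only [inner_sub_left, inner_sub_right]
  ring

end

section

variable {V H : Type*} [NormedAddCommGroup V] [InnerProductSpace ℝ V]
  [NormedAddCommGroup H] [InnerProductSpace ℝ H] (D : V →ₗ[ℝ] H)

theorem goal_error_eq {f fh Q : V →ₗ[ℝ] ℝ} {u utilde : V} {σ : H}
    (hu : ∀ w, ⟪D u, D w⟫ = f w) (hutilde : ∀ w, ⟪D utilde, D w⟫ = Q w)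
    (hσ : ∀ w, ⟪σ, D w⟫ = fh w) (s : V) (m : H) :
    Q u - Q s - ⟪σ - D s, m⟫ = (f - fh) utilde + ⟪σ - D s, D utilde - m⟫ := by
  have hQ : Q u - Q s = ⟪D u - D s, D utilde⟫ := by
    rw [← map_sub, ← map_sub, ← hutilde, real_inner_comm]
  have hres : (f - fh) utilde = ⟪D u - σ, D utilde⟫ := by
    rw [LinearMap.sub_apply, ← hu, ← hσ, inner_sub_left]
  rw [hQ, hres, inner_sub_sub_eq_inner_sub_add_inner]

theorem norm_sub_dual_average_sq {Q ftildeh : V →ₗ[ℝ] ℝ} {utilde : V} {σtilde : H}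
    (hutilde : ∀ w, ⟪D utilde, D w⟫ = Q w) (hσtilde : ∀ w, ⟪σtilde, D w⟫ = ftildeh w)
    (stilde : V) :
    ‖D utilde - (1 / 2 : ℝ) • (σtilde + D stilde)‖ ^ 2 =
      ((1 / 2 : ℝ) * ‖D stilde - σtilde‖) ^ 2 + (Q - ftildeh) (utilde - stilde) := by
  rw [norm_sub_half_smul_add_sq, LinearMap.sub_apply, ← hutilde, ← hσtilde, map_sub,
    inner_sub_left]

end

/-- Abstract goal-oriented a posteriori estimator (Theorem 4.3, form (4.13)). -/
theorem abstract_goal_estimator_simplified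
    {V H : Type*} [NormedAddCommGroup V] [InnerProductSpace ℝ V]
    [NormedAddCommGroup H] [InnerProductSpace ℝ H]
    (D : V →ₗ[ℝ] H) (f fh Q ftildeh : V →ₗ[ℝ] ℝ)
    (u utilde : V) (σ σtilde : H)
    (hu : ∀ w : V, ⟪D u, D w⟫ = f w)
    (hutilde : ∀ w : V, ⟪D utilde, D w⟫ = Q w)
    (hσ : ∀ w : V, ⟪σ, D w⟫ = fh w)
    (hσtilde : ∀ w : V, ⟪σtilde, D w⟫ = ftildeh w)
    (s stilde : V) :
    |Q u - Q s - ⟪σ - D s, (1 / 2 : ℝ) • (σtilde + D stilde)⟫| ≤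
      ‖D s - σ‖ * ((1 / 2 : ℝ) * ‖D stilde - σtilde‖
          + Real.sqrt |(Q - ftildeh) (utilde - stilde)|)
        + |(f - fh) stilde| + |(f - fh) (utilde - stilde)| := by
  set m : H := (1 / 2 : ℝ) • (σtilde + D stilde)
  have hm : ‖D utilde - m‖ ≤
      (1 / 2 : ℝ) * ‖D stilde - σtilde‖ + Real.sqrt |(Q - ftildeh) (utilde - stilde)| :=
    le_add_sqrt_abs_of_sq_eq (by positivity) (norm_sub_dual_average_sq D hutilde hσtilde stilde)
  have hosc : |(f - fh) utilde| ≤ |(f - fh) stilde| + |(f - fh) (utilde - stilde)| := by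
    simpa only [← map_add, add_sub_cancel] using
      abs_add_le ((f - fh) stilde) ((f - fh) (utilde - stilde))
  have hcs : |⟪σ - D s, D utilde - m⟫| ≤ ‖D s - σ‖ * ‖D utilde - m‖ :=
    norm_sub_rev σ (D s) ▸ abs_real_inner_le_norm _ _
  rw [goal_error_eq D hu hutilde hσ s m]
  calc |(f - fh) utilde + ⟪σ - D s, D utilde - m⟫|
      ≤ |(f - fh) utilde| + |⟪σ - D s, D utilde - m⟫| := abs_add_le _ _
    _ ≤ _ := by linarith [mul_le_mul_of_nonneg_left hm (norm_nonneg (D s - σ))]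
end

section
/- Let V, H and W be real inner product spaces, D : V → H and ι : V → W linear maps. Let f, f_h and f̃_h be linear functionals on V and f̃ ∈ W; define Q(v) = ⟨f̃, ι v⟩ for v ∈ V. Assume u ∈ V satisfies ⟨D u, D w⟩ = f(w) for all w ∈ V, ũ ∈ V satisfies ⟨D ũ, D w⟩ = ⟨f̃, ι w⟩ for all w ∈ V, σ ∈ H satisfies ⟨σ, D w⟩ = f_h(w) for all w ∈ V, and σ̃ ∈ H satisfies ⟨σ̃, D w⟩ = f̃_h(w) for all w ∈ V. For s, s̃ ∈ V and u_h ∈ W set σ̃ᵐ = (1/2)(σ̃ + D s̃), osc_dual = |⟨f̃, ι(ũ − s̃)⟩ − f̃_h(ũ − s̃)|^{1/2} and osc_prim² = |(f − f_h)(ũ − s̃)|. Then | Q(u) − ⟨f̃, u_h⟩ − ⟨σ − D s, σ̃ᵐ⟩ | ≤ ‖D s − σ‖ ( (1/2) ‖D s̃ − σ̃‖ + osc_dual ) + | (f − f_h)(s̃) + ⟨f̃, ι s⟩ − ⟨f̃, u_h⟩ | + osc_prim². -/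
open RealInnerProductSpace

/-- Abstract goal-oriented a posteriori estimator (Theorem 4.3, eq. (4.10)). -/
theorem abstract_goal_estimator
    {V H W : Type*} [NormedAddCommGroup V] [InnerProductSpace ℝ V]
    [NormedAddCommGroup H] [InnerProductSpace ℝ H]
    [NormedAddCommGroup W] [InnerProductSpace ℝ W]
    (D : V →ₗ[ℝ] H) (ι : V →ₗ[ℝ] W)
    (f fh ftildeh : V →ₗ[ℝ] ℝ) (ftilde : W)
    (Q : V → ℝ) (hQ : ∀ v : V, Q v = ⟪ftilde, ι v⟫)
    (u utilde : V) (σ σtilde : H)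
    (hu : ∀ w : V, ⟪D u, D w⟫ = f w)
    (hutilde : ∀ w : V, ⟪D utilde, D w⟫ = ⟪ftilde, ι w⟫)
    (hσ : ∀ w : V, ⟪σ, D w⟫ = fh w)
    (hσtilde : ∀ w : V, ⟪σtilde, D w⟫ = ftildeh w)
    (s stilde : V) (uh : W) :
    |Q u - ⟪ftilde, uh⟫ - ⟪σ - D s, (1 / 2 : ℝ) • (σtilde + D stilde)⟫| ≤
      ‖D s - σ‖ * ((1 / 2 : ℝ) * ‖D stilde - σtilde‖
          + Real.sqrt |⟪ftilde, ι (utilde - stilde)⟫ - ftildeh (utilde - stilde)|)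
        + |(f - fh) stilde + ⟪ftilde, ι s⟫ - ⟪ftilde, uh⟫|
        + |(f - fh) (utilde - stilde)| := by
  set m : H := (1 / 2 : ℝ) • (σtilde + D stilde) with hm
  set c : ℝ := ⟪ftilde, ι (utilde - stilde)⟫ - ftildeh (utilde - stilde) with hc
  -- key algebraic identity
  have key : Q u - ⟪ftilde, uh⟫ - ⟪σ - D s, m⟫
      = -⟪D utilde - m, D s - σ⟫
        + ((f - fh) stilde + ⟪ftilde, ι s⟫ - ⟪ftilde, uh⟫)
        + (f - fh) (utilde - stilde) := by
    simp only [hQ, ← hutilde, LinearMap.sub_apply, ← hu, ← hσ, hm, map_sub]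
    simp only [inner_sub_left, inner_sub_right, inner_add_left, inner_add_right,
      inner_smul_left, inner_smul_right, RCLike.conj_to_real]
    ring_nf
    linarith [real_inner_comm (D utilde) (D u), real_inner_comm σ (D utilde),
      real_inner_comm (D s) (D utilde), real_inner_comm (D s) σtilde,
      real_inner_comm (D s) (D stilde), real_inner_comm σ σtilde,
      real_inner_comm σ (D stilde), real_inner_comm (D u) (D stilde),
      real_inner_comm σ (D u)]
  -- norm identity for the averaged flux
  have hnorm2 : ‖D utilde - m‖ ^ 2 = (1 / 4) * ‖D stilde - σtilde‖ ^ 2 + c := by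
    have h1 : ⟪D utilde - m, D utilde - m⟫
        = (1 / 4) * ⟪D stilde - σtilde, D stilde - σtilde⟫ + c := by
      rw [hc, ← hutilde, ← hσtilde, hm]
      simp only [inner_sub_left, inner_sub_right, inner_add_left, inner_add_right,
        inner_smul_left, inner_smul_right, RCLike.conj_to_real, map_sub]
      ring_nf
      linarith [real_inner_comm (D utilde) σtilde, real_inner_comm (D utilde) (D stilde),
        real_inner_comm σtilde (D stilde)]
    rw [← real_inner_self_eq_norm_sq, ← real_inner_self_eq_norm_sq, h1]
  have hcnn : (0:ℝ) ≤ Real.sqrt |c| := Real.sqrt_nonneg _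
  have hnormb : ‖D utilde - m‖ ≤ (1 / 2) * ‖D stilde - σtilde‖ + Real.sqrt |c| := by
    have hsq : Real.sqrt |c| ^ 2 = |c| := Real.sq_sqrt (abs_nonneg c)
    have hle : ‖D utilde - m‖ ^ 2
        ≤ ((1 / 2) * ‖D stilde - σtilde‖ + Real.sqrt |c|) ^ 2 := by
      have : c ≤ |c| := le_abs_self c
      nlinarith [norm_nonneg (D stilde - σtilde), hcnn]
    nlinarith [norm_nonneg (D utilde - m), norm_nonneg (D stilde - σtilde), hcnn]
  have hCS : |⟪D utilde - m, D s - σ⟫| ≤ ‖D s - σ‖ * ‖D utilde - m‖ := by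
    rw [real_inner_comm]
    exact abs_real_inner_le_norm _ _
  calc |Q u - ⟪ftilde, uh⟫ - ⟪σ - D s, m⟫|
      = |(-⟪D utilde - m, D s - σ⟫)
          + ((f - fh) stilde + ⟪ftilde, ι s⟫ - ⟪ftilde, uh⟫)
          + (f - fh) (utilde - stilde)| := by rw [key]
    _ ≤ |⟪D utilde - m, D s - σ⟫|
          + |(f - fh) stilde + ⟪ftilde, ι s⟫ - ⟪ftilde, uh⟫|
          + |(f - fh) (utilde - stilde)| := by
        have := abs_add_le ((-⟪D utilde - m, D s - σ⟫)
          + ((f - fh) stilde + ⟪ftilde, ι s⟫ - ⟪ftilde, uh⟫)) ((f - fh) (utilde - stilde))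
        have h2 := abs_add_le (-⟪D utilde - m, D s - σ⟫)
          ((f - fh) stilde + ⟪ftilde, ι s⟫ - ⟪ftilde, uh⟫)
        rw [abs_neg] at h2
        linarith
    _ ≤ ‖D s - σ‖ * ((1 / 2) * ‖D stilde - σtilde‖ + Real.sqrt |c|)
          + |(f - fh) stilde + ⟪ftilde, ι s⟫ - ⟪ftilde, uh⟫|
          + |(f - fh) (utilde - stilde)| := by
        have := mul_le_mul_of_nonneg_left hnormb (norm_nonneg (D s - σ))
        linarith [hCS.trans this]
end

section
/- Let V, H and W be real inner product spaces, D : V → H and ι : V → W linear maps, and f̃ ∈ W; define Q(v) = ⟨f̃, ι v⟩ for v ∈ V. Assume u ∈ V satisfies ⟨D u, D w⟩ = f(w) for all w ∈ V, ũ ∈ V satisfies ⟨D ũ, D w⟩ = ⟨f̃, ι w⟩ for all w ∈ V, σ ∈ H satisfies ⟨σ, D w⟩ = f(w) for all w ∈ V (no primal data oscillation), and σ̃ ∈ H satisfies ⟨σ̃, D w⟩ = ⟨f̃, ι w⟩ for all w ∈ V (no dual data oscillation). For s, s̃ ∈ V and u_h ∈ W set σ̃ᵐ = (1/2)(σ̃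 + D s̃). Then | Q(u) − ⟨f̃, u_h⟩ − ⟨σ − D s, σ̃ᵐ⟩ | ≤ (1/2) ‖D s − σ‖ ‖D s̃ − σ̃‖ + | ⟨f̃, ι s⟩ − ⟨f̃, u_h⟩ |. -/
open RealInnerProductSpace

set_option maxHeartbeats 1000000 in
/-- Simplified goal estimator (4.18) with vanishing primal and dual data oscillations. -/
theorem abstract_goal_estimator_no_osc
    {V H W : Type*} [NormedAddCommGroup V] [InnerProductSpace ℝ V]
    [NormedAddCommGroup H] [InnerProductSpace ℝ H]
    [NormedAddCommGroup W] [InnerProductSpace ℝ W]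
    (D : V →ₗ[ℝ] H) (ι : V →ₗ[ℝ] W)
    (f : V →ₗ[ℝ] ℝ) (ftilde : W)
    (Q : V → ℝ) (hQ : ∀ v : V, Q v = ⟪ftilde, ι v⟫)
    (u utilde : V) (σ σtilde : H)
    (hu : ∀ w : V, ⟪D u, D w⟫ = f w)
    (hutilde : ∀ w : V, ⟪D utilde, D w⟫ = ⟪ftilde, ι w⟫)
    (hσ : ∀ w : V, ⟪σ, D w⟫ = f w)
    (hσtilde : ∀ w : V, ⟪σtilde, D w⟫ = ⟪ftilde, ι w⟫)
    (s stilde : V) (uh : W) :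
    |Q u - ⟪ftilde, uh⟫ - ⟪σ - D s, (1 / 2 : ℝ) • (σtilde + D stilde)⟫| ≤
      (1 / 2 : ℝ) * ‖D s - σ‖ * ‖D stilde - σtilde‖
        + |⟪ftilde, ι s⟫ - ⟪ftilde, uh⟫| := by
  -- key algebraic identity
  have e1 : ⟪D u, D stilde⟫ = f stilde := hu stilde
  have e2 : ⟪σ, D stilde⟫ = f stilde := hσ stilde
  have e3 : ⟪D u, D utilde⟫ = ⟪ftilde, ι u⟫ := by
    rw [real_inner_comm]; exact hutilde u
  have e4 : ⟪D s, D utilde⟫ = ⟪ftilde, ι s⟫ := by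
    rw [real_inner_comm]; exact hutilde s
  have e5 : ⟪D s, σtilde⟫ = ⟪ftilde, ι s⟫ := by
    rw [real_inner_comm]; exact hσtilde s
  have e6 : ⟪D u, σtilde⟫ = ⟪ftilde, ι u⟫ := by
    rw [real_inner_comm]; exact hσtilde u
  have e7 : ⟪σ, D utilde⟫ = f utilde := hσ utilde
  have e8 : ⟪D u, D utilde⟫ = f utilde := hu utilde
  have key : Q u - ⟪ftilde, uh⟫ - ⟪σ - D s, (1 / 2 : ℝ) • (σtilde + D stilde)⟫
      = (1/2 : ℝ) * ⟪D u - D s, D utilde - D stilde⟫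
        - (1/2 : ℝ) * ⟪σ - D u, σtilde - D utilde⟫
        + (⟪ftilde, ι s⟫ - ⟪ftilde, uh⟫) := by
    simp only [hQ, inner_sub_left, inner_sub_right, inner_add_right,
      real_inner_smul_right]
    linarith
  -- orthogonality
  have hDx_p : ⟪D u - D s, σ - D u⟫ = 0 := by
    have h1' := hσ u
    have h2' := hσ s
    have h3' := hu u
    have h4' := hu s
    rw [inner_sub_left, inner_sub_right, inner_sub_right,
      real_inner_comm σ (D u), real_inner_comm σ (D s), real_inner_comm (D u) (D s)]
    linarith
  have hDxt_q : ⟪D utilde - D stilde, σtilde - D utilde⟫ = 0 := by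
    have h1' := hσtilde utilde
    have h2' := hσtilde stilde
    have h3' := hutilde utilde
    have h4' := hutilde stilde
    rw [inner_sub_left, inner_sub_right, inner_sub_right,
      real_inner_comm σtilde (D utilde), real_inner_comm σtilde (D stilde),
      real_inner_comm (D utilde) (D stilde)]
    linarith
  set a := ‖D u - D s‖ with ha
  set b := ‖D utilde - D stilde‖ with hb
  set c := ‖σ - D u‖ with hc
  set d := ‖σtilde - D utilde‖ with hd
  have hcomm1 : ⟪σ - D u, D u - D s⟫ = (0:ℝ) := by
    rw [real_inner_comm]; exact hDx_p
  have hcomm2 : ⟪σtilde - D utilde, D utilde - D stilde⟫ = (0:ℝ) := by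
    rw [real_inner_comm]; exact hDxt_q
  have hn1 : ‖D s - σ‖^2 = a^2 + c^2 := by
    have h : D s - σ = -((D u - D s) + (σ - D u)) := by abel
    rw [h, norm_neg, ← real_inner_self_eq_norm_sq, inner_add_add_self, hDx_p, hcomm1,
      real_inner_self_eq_norm_sq, real_inner_self_eq_norm_sq]
    ring
  have hn2 : ‖D stilde - σtilde‖^2 = b^2 + d^2 := by
    have h : D stilde - σtilde = -((D utilde - D stilde) + (σtilde - D utilde)) := by abel
    rw [h, norm_neg, ← real_inner_self_eq_norm_sq, inner_add_add_self, hDxt_q, hcomm2,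
      real_inner_self_eq_norm_sq, real_inner_self_eq_norm_sq]
    ring
  have h1 : |⟪D u - D s, D utilde - D stilde⟫| ≤ a * b := abs_real_inner_le_norm _ _
  have h2 : |⟪σ - D u, σtilde - D utilde⟫| ≤ c * d := abs_real_inner_le_norm _ _
  have hN1 : (0:ℝ) ≤ ‖D s - σ‖ := norm_nonneg _
  have hN2 : (0:ℝ) ≤ ‖D stilde - σtilde‖ := norm_nonneg _
  have ha0 : (0:ℝ) ≤ a := norm_nonneg _
  have hb0 : (0:ℝ) ≤ b := norm_nonneg _
  have hc0 : (0:ℝ) ≤ c := norm_nonneg _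
  have hd0 : (0:ℝ) ≤ d := norm_nonneg _
  have h3 : a * b + c * d ≤ ‖D s - σ‖ * ‖D stilde - σtilde‖ := by
    nlinarith [sq_nonneg (a*d - c*b), mul_nonneg hN1 hN2, mul_nonneg ha0 hb0,
      mul_nonneg hc0 hd0, sq_nonneg (‖D s - σ‖ * ‖D stilde - σtilde‖ - a*b - c*d),
      sq_nonneg (‖D s - σ‖ - ‖D stilde - σtilde‖)]
  rw [key]
  have h4 : |(1/2 : ℝ) * ⟪D u - D s, D utilde - D stilde⟫
      - (1/2 : ℝ) * ⟪σ - D u, σtilde - D utilde⟫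
      + (⟪ftilde, ι s⟫ - ⟪ftilde, uh⟫)|
      ≤ (1/2 : ℝ) * (a*b) + (1/2 : ℝ) * (c*d) + |⟪ftilde, ι s⟫ - ⟪ftilde, uh⟫| := by
    have := abs_add_le ((1/2 : ℝ) * ⟪D u - D s, D utilde - D stilde⟫
      - (1/2 : ℝ) * ⟪σ - D u, σtilde - D utilde⟫) (⟪ftilde, ι s⟫ - ⟪ftilde, uh⟫)
    have h5 := abs_sub ((1/2 : ℝ) * ⟪D u - D s, D utilde - D stilde⟫)
      ((1/2 : ℝ) * ⟪σ - D u, σtilde - D utilde⟫)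
    rw [abs_mul, abs_mul] at h5
    simp only [abs_of_pos (by norm_num : (0:ℝ) < 1/2)] at h5
    linarith
  linarith
end

section
/- Let V and H be real inner product spaces and D : V → H a linear map. Let f̃ and f̃_h be linear functionals on V, and suppose C ≥ 0 is such that |(f̃ − f̃_h)(v)| ≤ C ‖D v‖ for all v ∈ V. Assume ũ ∈ V satisfies ⟨D ũ, D w⟩ = f̃(w) for all w ∈ V, there exists û ∈ V with ⟨D û, D w⟩ = f̃_h(w) for all w ∈ V, and σ̃ ∈ H satisfies ⟨σ̃, D w⟩ = f̃_h(w) for all w ∈ V. Then for every s̃ ∈ V: ‖D(ũ − s̃)‖ ≤ C + ‖D s̃ − σ̃‖. -/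
/-!
Let û solve the energy problem with datum f̃_h. Testing the difference of the two weak
formulations with ũ − û gives ‖D(ũ − û)‖² = (f̃ − f̃_h)(ũ − û) ≤ C ‖D(ũ − û)‖, and testing
the equilibration of σ̃ against that of û with û − s̃ gives
‖D(û − s̃)‖² = ⟪σ̃ − D s̃, D(û − s̃)⟫ ≤ ‖D s̃ − σ̃‖ ‖D(û − s̃)‖.
Both inequalities have the form ‖x‖² ≤ c ‖x‖, hence ‖x‖ ≤ c; the triangle inequality
through D û concludes.
-/

open RealInnerProductSpace

section

variable {V H : Type*} [AddCommGroup V] [Module ℝ V]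
  [NormedAddCommGroup H] [InnerProductSpace ℝ H]

theorem norm_le_of_inner_self_le_mul_norm {x : H} {c : ℝ} (hc : 0 ≤ c)
    (h : ⟪x, x⟫ ≤ c * ‖x‖) : ‖x‖ ≤ c := by
  rw [real_inner_self_eq_norm_mul_norm] at h
  rcases (norm_nonneg x).eq_or_lt with hx | hx
  · exact hx ▸ hc
  · exact le_of_mul_le_mul_right h hx

theorem norm_map_sub_le_of_perturbed_data (D : V →ₗ[ℝ] H) {f g : V →ₗ[ℝ] ℝ} {C : ℝ}
    (hC : 0 ≤ C) (hpert : ∀ v, |(f - g) v| ≤ C * ‖D v‖) {u w : V}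
    (hu : ∀ v, ⟪D u, D v⟫ = f v) (hw : ∀ v, ⟪D w, D v⟫ = g v) :
    ‖D (u - w)‖ ≤ C := by
  refine norm_le_of_inner_self_le_mul_norm hC ?_
  have error_eq : ∀ v, ⟪D (u - w), D v⟫ = (f - g) v := fun v => by
    rw [map_sub, inner_sub_left, hu, hw, LinearMap.sub_apply]
  rw [error_eq]
  exact (le_abs_self _).trans (hpert _)

theorem norm_map_sub_le_of_inner_eq (D : V →ₗ[ℝ] H) {g : V →ₗ[ℝ] ℝ} {u s : V} {σ : H}
    (hu : ∀ v, ⟪D u, D v⟫ = g v) (hσ : ∀ v, ⟪σ, D v⟫ = g v) :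
    ‖D (u - s)‖ ≤ ‖D s - σ‖ := by
  refine norm_le_of_inner_self_le_mul_norm (norm_nonneg _) ?_
  have error_eq : ∀ v, ⟪D (u - s), D v⟫ = ⟪σ - D s, D v⟫ := fun v => by
    rw [map_sub, inner_sub_left, inner_sub_left, hu, hσ]
  rw [error_eq, norm_sub_rev]
  exact real_inner_le_norm _ _

end

/-- Bound (4.19) on the energy distance between the exact dual solution
and the potential reconstruction. -/
theorem dual_solution_reconstruction_bound
    {V H : Type*} [NormedAddCommGroup V] [InnerProductSpace ℝ V]
    [NormedAddCommGroup H] [InnerProductSpace ℝ H]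
    (D : V →ₗ[ℝ] H) (ftilde ftildeh : V →ₗ[ℝ] ℝ) (C : ℝ) (hC : 0 ≤ C)
    (hpert : ∀ v : V, |(ftilde - ftildeh) v| ≤ C * ‖D v‖)
    (utilde : V) (σtilde : H)
    (hutilde : ∀ w : V, ⟪D utilde, D w⟫ = ftilde w)
    (huhat : ∃ uhat : V, ∀ w : V, ⟪D uhat, D w⟫ = ftildeh w)
    (hσtilde : ∀ w : V, ⟪σtilde, D w⟫ = ftildeh w)
    (stilde : V) :
    ‖D (utilde - stilde)‖ ≤ C + ‖D stilde - σtilde‖ := by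
  obtain ⟨uhat, huhat⟩ := huhat
  calc ‖D (utilde - stilde)‖ = ‖D (utilde - uhat) + D (uhat - stilde)‖ := by
        rw [← map_add, sub_add_sub_cancel]
    _ ≤ ‖D (utilde - uhat)‖ + ‖D (uhat - stilde)‖ := norm_add_le _ _
    _ ≤ C + ‖D stilde - σtilde‖ :=
        add_le_add (norm_map_sub_le_of_perturbed_data D hC hpert hutilde huhat)
          (norm_map_sub_le_of_inner_eq D huhat hσtilde)
end

section
/- Let V and H be real inner product spaces and D : V → H a linear map. Let f̃ and f̃_h be linear functionals on V, and suppose C ≥ 0 is such that |(f̃ − f̃_h)(v)| ≤ C ‖D v‖ for all v ∈ V. Assume ũ ∈ V satisfies ⟨D ũ, D w⟩ = f̃(w) for all w ∈ V, there exists û ∈ V with ⟨D û, D w⟩ = f̃_h(w) for all w ∈ V, and σ̃ ∈ H satisfies ⟨σ̃, D w⟩ = f̃_h(w) for all w ∈ V. Then for every s̃ ∈ V the dual data oscillation obeys |(f̃ − f̃_h)(ũ − s̃)| ≤ C ( C + ‖D s̃ − σ̃‖ ). -/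
open RealInnerProductSpace

/-! The residual `D ũ - σ̃` represents `f̃ - f̃_h` on the range of `D`, so testing it with
`ũ - s̃` gives the Prager–Synge-type energy bound `‖D (ũ - s̃)‖ ≤ C + ‖D s̃ - σ̃‖`;
the perturbation bound applied to `ũ - s̃` then yields the estimate. -/

lemma norm_le_of_norm_sq_le_mul {E : Type*} [SeminormedAddCommGroup E] {x : E} {c : ℝ}
    (hc : 0 ≤ c) (h : ‖x‖ ^ 2 ≤ c * ‖x‖) : ‖x‖ ≤ c := by
  rcases (norm_nonneg x).eq_or_lt with hx | hx
  · exact hx ▸ hc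
  · exact le_of_mul_le_mul_right (by nlinarith) hx

lemma norm_sub_le_of_inner_sub_le {H : Type*} [NormedAddCommGroup H] [InnerProductSpace ℝ H]
    {a b σ : H} {c : ℝ} (hc : 0 ≤ c) (h : ⟪a - σ, a - b⟫ ≤ c * ‖a - b‖) :
    ‖a - b‖ ≤ c + ‖b - σ‖ := by
  refine norm_le_of_norm_sq_le_mul (by positivity) ?_
  calc ‖a - b‖ ^ 2 = ⟪a - σ, a - b⟫ + ⟪σ - b, a - b⟫ := by
        rw [← inner_add_left, sub_add_sub_cancel, real_inner_self_eq_norm_sq]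
    _ ≤ c * ‖a - b‖ + ‖σ - b‖ * ‖a - b‖ := add_le_add h (real_inner_le_norm _ _)
    _ = (c + ‖b - σ‖) * ‖a - b‖ := by rw [norm_sub_rev σ b]; ring

theorem dual_oscillation_bound_general
    {V H : Type*} [NormedAddCommGroup V] [InnerProductSpace ℝ V]
    [NormedAddCommGroup H] [InnerProductSpace ℝ H]
    (D : V →ₗ[ℝ] H) (ftilde ftildeh : V →ₗ[ℝ] ℝ) (C : ℝ) (hC : 0 ≤ C)
    (hpert : ∀ v : V, |(ftilde - ftildeh) v| ≤ C * ‖D v‖)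
    (utilde : V) (σtilde : H)
    (hutilde : ∀ w : V, ⟪D utilde, D w⟫ = ftilde w)
    (hσtilde : ∀ w : V, ⟪σtilde, D w⟫ = ftildeh w)
    (stilde : V) :
    |(ftilde - ftildeh) (utilde - stilde)| ≤ C * (C + ‖D stilde - σtilde‖) := by
  have hresidual : ∀ w : V, ⟪D utilde - σtilde, D w⟫ = (ftilde - ftildeh) w := fun w => by
    rw [inner_sub_left, hutilde, hσtilde, LinearMap.sub_apply]
  have henergy : ‖D utilde - D stilde‖ ≤ C + ‖D stilde - σtilde‖ := by
    refine norm_sub_le_of_inner_sub_le hC ?_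
    calc ⟪D utilde - σtilde, D utilde - D stilde⟫ = (ftilde - ftildeh) (utilde - stilde) := by
          rw [← map_sub, hresidual]
      _ ≤ C * ‖D utilde - D stilde‖ := (le_abs_self _).trans (map_sub D _ _ ▸ hpert _)
  calc |(ftilde - ftildeh) (utilde - stilde)| ≤ C * ‖D utilde - D stilde‖ :=
        map_sub D _ _ ▸ hpert _
    _ ≤ C * (C + ‖D stilde - σtilde‖) := mul_le_mul_of_nonneg_left henergy hC

/-- Computable bound (4.20) on the dual data oscillation. -/
theorem dual_oscillation_bound
    {V H : Type*} [NormedAddCommGroup V] [InnerProductSpace ℝ V]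
    [NormedAddCommGroup H] [InnerProductSpace ℝ H]
    (D : V →ₗ[ℝ] H) (ftilde ftildeh : V →ₗ[ℝ] ℝ) (C : ℝ) (hC : 0 ≤ C)
    (hpert : ∀ v : V, |(ftilde - ftildeh) v| ≤ C * ‖D v‖)
    (utilde : V) (σtilde : H)
    (hutilde : ∀ w : V, ⟪D utilde, D w⟫ = ftilde w)
    (huhat : ∃ uhat : V, ∀ w : V, ⟪D uhat, D w⟫ = ftildeh w)
    (hσtilde : ∀ w : V, ⟪σtilde, D w⟫ = ftildeh w)
    (stilde : V) :
    |(ftilde - ftildeh) (utilde - stilde)| ≤ C * (C + ‖D stilde - σtilde‖) :=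
  dual_oscillation_bound_general D ftilde ftildeh C hC hpert utilde σtilde hutilde hσtilde stilde
end

section
/- Let V and H be real inner product spaces and D : V → H a linear map. Let f, f_h, f̃ and f̃_h be linear functionals on V, and suppose C, C' ≥ 0 are such that |(f̃ − f̃_h)(v)| ≤ C ‖D v‖ and |(f − f_h)(v)| ≤ C' ‖D v‖ for all v ∈ V. Assume ũ ∈ V satisfies ⟨D ũ, D w⟩ = f̃(w) for all w ∈ V, there exists û ∈ V with ⟨D û, D w⟩ = f̃_h(w) for all w ∈ V, and σ̃ ∈ H satisfies ⟨σ̃, D w⟩ = f̃_h(w) for all w ∈ V. Then for every s̃ ∈ V the primal data oscillation obeys |(f − f_h)(ũ − s̃)| ≤ C' ( C + ‖D s̃ − σ̃‖ ). -/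
open RealInnerProductSpace

/-- Computable bound (4.21) on the primal data oscillation. -/
theorem primal_oscillation_bound
    {V H : Type*} [NormedAddCommGroup V] [InnerProductSpace ℝ V]
    [NormedAddCommGroup H] [InnerProductSpace ℝ H]
    (D : V →ₗ[ℝ] H) (f fh ftilde ftildeh : V →ₗ[ℝ] ℝ)
    (C C' : ℝ) (hC : 0 ≤ C) (hC' : 0 ≤ C')
    (hpert_dual : ∀ v : V, |(ftilde - ftildeh) v| ≤ C * ‖D v‖)
    (hpert_prim : ∀ v : V, |(f - fh) v| ≤ C' * ‖D v‖)
    (utilde : V) (σtilde : H)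
    (hutilde : ∀ w : V, ⟪D utilde, D w⟫ = ftilde w)
    (huhat : ∃ uhat : V, ∀ w : V, ⟪D uhat, D w⟫ = ftildeh w)
    (hσtilde : ∀ w : V, ⟪σtilde, D w⟫ = ftildeh w)
    (stilde : V) :
    |(f - fh) (utilde - stilde)| ≤ C' * (C + ‖D stilde - σtilde‖) := by
  set v := utilde - stilde with hv
  have key : ‖D v‖ ≤ C + ‖D stilde - σtilde‖ := by
    have hsq : ‖D v‖ ^ 2 ≤ (C + ‖D stilde - σtilde‖) * ‖D v‖ := by
      have h1 : (‖D v‖ : ℝ) ^ 2 = ⟪D utilde - D stilde, D v⟫ := by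
        rw [← real_inner_self_eq_norm_sq]
        congr 1
        rw [hv, map_sub]
      have h2 : ⟪D utilde - D stilde, D v⟫
          = (ftilde - ftildeh) v + ⟪σtilde - D stilde, D v⟫ := by
        rw [inner_sub_left, inner_sub_left, hutilde, hσtilde]
        simp
      have h3 : (ftilde - ftildeh) v ≤ C * ‖D v‖ :=
        (abs_le.mp (hpert_dual v)).2
      have h4 : ⟪σtilde - D stilde, D v⟫ ≤ ‖D stilde - σtilde‖ * ‖D v‖ := by
        calc ⟪σtilde - D stilde, D v⟫ ≤ ‖σtilde - D stilde‖ * ‖D v‖ :=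
              real_inner_le_norm _ _
          _ = ‖D stilde - σtilde‖ * ‖D v‖ := by rw [norm_sub_rev]
      calc ‖D v‖ ^ 2 = (ftilde - ftildeh) v + ⟪σtilde - D stilde, D v⟫ := by
            rw [h1, h2]
        _ ≤ C * ‖D v‖ + ‖D stilde - σtilde‖ * ‖D v‖ := add_le_add h3 h4
        _ = (C + ‖D stilde - σtilde‖) * ‖D v‖ := by ring
    rcases eq_or_lt_of_le (norm_nonneg (D v)) with h0 | h0
    · rw [← h0]; positivity
    · nlinarith
  calc |(f - fh) v| ≤ C' * ‖D v‖ := hpert_prim v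
    _ ≤ C' * (C + ‖D stilde - σtilde‖) := by
        exact mul_le_mul_of_nonneg_left key hC'
end

section
/- Let V and H be real inner product spaces and D : V → H a linear map. Let f̃ and f̃_h be linear functionals on V. Assume ũ ∈ V satisfies ⟨D ũ, D w⟩ = f̃(w) for all w ∈ V and σ̃ ∈ H satisfies ⟨σ̃, D w⟩ = f̃_h(w) for all w ∈ V. Then for every s̃ ∈ V, with osc = |(f̃ − f̃_h)(ũ − s̃)|^{1/2}, one has ‖D ũ − σ̃‖ ≤ ‖D s̃ − σ̃‖ + √2 · osc. -/
open RealInnerProductSpace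

/-- Bound from Section 5.1: ‖D ũ − σ̃‖ ≤ ‖D s̃ − σ̃‖ + √2 · osc. -/
theorem dual_tensor_distance_bound
    {V H : Type*} [NormedAddCommGroup V] [InnerProductSpace ℝ V]
    [NormedAddCommGroup H] [InnerProductSpace ℝ H]
    (D : V →ₗ[ℝ] H) (ftilde ftildeh : V →ₗ[ℝ] ℝ)
    (utilde : V) (σtilde : H)
    (hutilde : ∀ w : V, ⟪D utilde, D w⟫ = ftilde w)
    (hσtilde : ∀ w : V, ⟪σtilde, D w⟫ = ftildeh w)
    (stilde : V) :
    ‖D utilde - σtilde‖ ≤ ‖D stilde - σtilde‖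
      + Real.sqrt 2 * Real.sqrt |(ftilde - ftildeh) (utilde - stilde)| := by
  set x := D utilde
  set y := D stilde
  set z := σtilde
  set δ := (ftilde - ftildeh) (utilde - stilde) with hδ
  have h1 : ⟪x - y, x⟫ = ftilde (utilde - stilde) := by
    rw [real_inner_comm]
    simpa [x, y, map_sub] using hutilde (utilde - stilde)
  have h2 : ⟪x - y, z⟫ = ftildeh (utilde - stilde) := by
    rw [real_inner_comm]
    simpa [x, y, map_sub] using hσtilde (utilde - stilde)
  have hid : ‖x - z‖ ^ 2 = ‖y - z‖ ^ 2 - ‖x - y‖ ^ 2 + 2 * δ := by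
    have e1 : ‖x - z‖ ^ 2 = ⟪x - z, x - z⟫ := (real_inner_self_eq_norm_sq _).symm
    have e2 : ‖y - z‖ ^ 2 = ⟪y - z, y - z⟫ := (real_inner_self_eq_norm_sq _).symm
    have e3 : ‖x - y‖ ^ 2 = ⟪x - y, x - y⟫ := (real_inner_self_eq_norm_sq _).symm
    have hδ' : δ = ftilde (utilde - stilde) - ftildeh (utilde - stilde) := by
      simp [hδ]
    rw [e1, e2, e3, hδ', ← h1, ← h2]
    simp only [inner_sub_left, inner_sub_right]
    have hxy : ⟪x, y⟫ = ⟪y, x⟫ := real_inner_comm _ _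
    have hxz : ⟪x, z⟫ = ⟪z, x⟫ := real_inner_comm _ _
    have hyz : ⟪y, z⟫ = ⟪z, y⟫ := real_inner_comm _ _
    ring_nf
    linarith
  have hkey : ‖x - z‖ ^ 2 ≤ ‖y - z‖ ^ 2 + 2 * |δ| := by
    have := sq_nonneg ‖x - y‖
    have := le_abs_self δ
    linarith [hid]
  set b := Real.sqrt 2 * Real.sqrt |δ| with hb
  have hbnn : 0 ≤ b := mul_nonneg (Real.sqrt_nonneg _) (Real.sqrt_nonneg _)
  have hb2 : b ^ 2 = 2 * |δ| := by
    rw [hb, mul_pow, Real.sq_sqrt (by norm_num : (0:ℝ) ≤ 2),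
      Real.sq_sqrt (abs_nonneg δ)]
  have hsq : ‖x - z‖ ^ 2 ≤ (‖y - z‖ + b) ^ 2 := by
    have : 0 ≤ 2 * ‖y - z‖ * b := by positivity
    nlinarith [hkey, hb2]
  have := Real.sqrt_le_sqrt hsq
  rwa [Real.sqrt_sq (norm_nonneg _),
    Real.sqrt_sq (by positivity : (0:ℝ) ≤ ‖y - z‖ + b)] at this
end
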